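/- arXiv:1404.4596 — 3 statements merged into one kernel-verified Lean document; each statement's English description precedes it below -/
import Mathlib

section
/- Let M be a positive integer, ℓ a prime, r = val_ℓ(M), and γ_ℓ ∈ Sp(4,ℤ) with γ_ℓ ≡ [[0,0,0,1],[0,0,1,0],[0,-1,0,0],[-1,0,0,0]] mod ℓ^r and γ_ℓ ≡ I₄ mod Mℓ^{-r}. Set U_ℓ = γ_ℓ · diag(ℓ^r, ℓ^r, 1, 1). Then U_ℓ² ∈ ℓ^r · Γ^para(M). -/
open Matrix

/-- The symplectic form `J = [[0,I₂],[-I₂,0]]` as a 4×4 rational matrix. -/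
def J4 : Matrix (Fin 4) (Fin 4) ℚ :=
  !![0,0,1,0; 0,0,0,1; -1,0,0,0; 0,-1,0,0]

/-- The matrix of lattice generators for the paramodular pattern
`[[ℤ,ℤ,N⁻¹ℤ,ℤ],[Nℤ,ℤ,ℤ,ℤ],[Nℤ,Nℤ,ℤ,Nℤ],[Nℤ,ℤ,ℤ,ℤ]]`. -/
def paraLat (N : ℕ) : Matrix (Fin 4) (Fin 4) ℚ :=
  !![1, 1, (N : ℚ)⁻¹, 1;
     (N : ℚ), 1, 1, 1;
     (N : ℚ), (N : ℚ), 1, (N : ℚ);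
     (N : ℚ), 1, 1, 1]

/-- The paramodular group `Γ^para(N)`: symplectic rational matrices whose `(i,j)` entry
lies in the lattice `paraLat N i j • ℤ`. -/
def paraGroup (N : ℕ) : Set (Matrix (Fin 4) (Fin 4) ℚ) :=
  {g | gᵀ * J4 * g = J4 ∧ ∀ i j, ∃ a : ℤ, g i j = paraLat N i j * a}

/-! ### Auxiliary integer matrices for the Atkin–Lehner computation -/

def wZ : Matrix (Fin 4) (Fin 4) ℤ := !![0,0,0,1;0,0,1,0;0,-1,0,0;-1,0,0,0]
def dZ (l : ℤ) : Matrix (Fin 4) (Fin 4) ℤ := !![l,0,0,0;0,l,0,0;0,0,1,0;0,0,0,1]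
def eZ (l : ℤ) : Matrix (Fin 4) (Fin 4) ℤ := !![1,0,0,0;0,1,0,0;0,0,l,0;0,0,0,l]

lemma AL_A1 (l : ℤ) : wZ * dZ l = eZ l * wZ := by
  ext i j; fin_cases i <;> fin_cases j <;>
    simp [wZ, dZ, eZ, Matrix.mul_apply, Fin.sum_univ_four, Matrix.vecHead, Matrix.vecTail,
      Function.comp]

lemma AL_A2 (l : ℤ) : dZ l * wZ * dZ l = l • wZ := by
  ext i j; fin_cases i <;> fin_cases j <;>
    simp [wZ, dZ, Matrix.mul_apply, Fin.sum_univ_four, Matrix.vecHead, Matrix.vecTail,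
      Function.comp]

lemma AL_A3 : wZ * wZ = -1 := by
  ext i j; fin_cases i <;> fin_cases j <;>
    simp [wZ, Matrix.mul_apply, Fin.sum_univ_four, Matrix.one_apply, Matrix.vecHead,
      Matrix.vecTail, Function.comp]

lemma AL_A4 (l : ℤ) : eZ l * dZ l = l • 1 := by
  ext i j; fin_cases i <;> fin_cases j <;>
    simp [dZ, eZ, Matrix.mul_apply, Fin.sum_univ_four, Matrix.one_apply, Matrix.vecHead,
      Matrix.vecTail, Function.comp]

lemma AL_ddiag (l : ℤ) (i j : Fin 4) (hij : i ≠ j) : (dZ l * dZ l) i j = 0 := by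
  fin_cases i <;> fin_cases j <;>
    first
      | exact (hij rfl).elim
      | simp [dZ, Matrix.mul_apply, Fin.sum_univ_four, Matrix.vecHead, Matrix.vecTail,
          Function.comp]

/-- The candidate paramodular element, as an integer matrix. -/
def kzDef (l : ℤ) (B : Matrix (Fin 4) (Fin 4) ℤ) : Matrix (Fin 4) (Fin 4) ℤ :=
  -1 + l • (B * wZ) + eZ l * wZ * B * dZ l + l • (B * dZ l * B * dZ l)

def tzDef (l n : ℤ) (C : Matrix (Fin 4) (Fin 4) ℤ) : Matrix (Fin 4) (Fin 4) ℤ :=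
  dZ l * C * dZ l + C * dZ l * dZ l + n • (C * dZ l * C * dZ l)

lemma AL_I1 (l : ℤ) (B : Matrix (Fin 4) (Fin 4) ℤ) :
    (wZ + l • B) * dZ l * (wZ + l • B) * dZ l = l • kzDef l B := by
  have h1 : wZ * dZ l * wZ * dZ l = l • (-1 : Matrix (Fin 4) (Fin 4) ℤ) := by
    rw [AL_A1, mul_assoc (eZ l) wZ wZ, AL_A3, mul_neg_one, neg_mul, AL_A4, smul_neg]
  have h3 : B * dZ l * wZ * dZ l = l • (B * wZ) := by
    rw [mul_assoc B (dZ l) wZ, mul_assoc B (dZ l * wZ) (dZ l), AL_A2, mul_smul_comm]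
  have h2 : wZ * dZ l * B * dZ l = eZ l * wZ * B * dZ l := by rw [AL_A1]
  simp only [kzDef, add_mul, mul_add, smul_mul_assoc, mul_smul_comm, smul_add, smul_smul]
  rw [h1, h2, h3]
  module

lemma AL_I2 (l n : ℤ) (C : Matrix (Fin 4) (Fin 4) ℤ) :
    (1 + n • C) * dZ l * (1 + n • C) * dZ l = dZ l * dZ l + n • tzDef l n C := by
  simp only [tzDef, add_mul, mul_add, one_mul, mul_one, smul_mul_assoc, mul_smul_comm,
    smul_add, smul_smul]
  abel

lemma AL_B1 (L : ℚ) : diagonal ![L,L,1,1] * J4 * diagonal ![L,L,1,1] = L • J4 := by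
  ext i j
  fin_cases i <;> fin_cases j <;>
    simp [J4, Matrix.mul_apply, Fin.sum_univ_four, Matrix.diagonal, Matrix.vecHead,
      Matrix.vecTail, Function.comp]

lemma AL_sympl (L : ℚ) (g : Matrix (Fin 4) (Fin 4) ℚ) (hg : gᵀ * J4 * g = J4) :
    (g * diagonal ![L,L,1,1] * g * diagonal ![L,L,1,1])ᵀ * J4 *
      (g * diagonal ![L,L,1,1] * g * diagonal ![L,L,1,1]) = (L*L) • J4 := by
  set D := diagonal ![L,L,1,1] with hDdef
  have hg' : ∀ X, gᵀ * (J4 * (g * X)) = J4 * X := by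
    intro X; rw [← mul_assoc, ← mul_assoc, hg]
  have hD' : ∀ X, D * (J4 * (D * X)) = L • (J4 * X) := by
    intro X; rw [← mul_assoc, ← mul_assoc, AL_B1, smul_mul_assoc]
  have hDt : Dᵀ = D := Matrix.diagonal_transpose _
  simp only [transpose_mul, hDt, mul_assoc]
  rw [hg' (D * (g * D)), hD' (g * D), mul_smul_comm, mul_smul_comm, hg' D,
    ← mul_assoc, AL_B1, smul_smul]

lemma AL_combine (l n x t : ℤ) (hco : IsCoprime (l*l) n) (h1 : l ∣ x)
    (h2 : l * x = n * t) : l * n ∣ x := by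
  obtain ⟨u, rfl⟩ := h1
  have hdvd : l * l ∣ n * t := ⟨u, by rw [← h2]; ring⟩
  obtain ⟨v, rfl⟩ := hco.dvd_of_dvd_mul_left hdvd
  rcases eq_or_ne l 0 with h0 | h0
  · subst h0; simp
  · have hu : u = n * v := by
      have hll : (l*l) ≠ 0 := mul_ne_zero h0 h0
      apply mul_left_cancel₀ hll
      rw [show l*l*u = l*(l*u) from by ring, h2]; ring
    exact ⟨v, by rw [hu]; ring⟩

lemma AL_wcast (i j : Fin 4) : ((wZ i j : ℤ) : ℚ)
    = (!![0,0,0,1; 0,0,1,0; 0,-1,0,0; -1,0,0,0] : Matrix (Fin 4) (Fin 4) ℚ) i j := by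
  fin_cases i <;> fin_cases j <;>
    simp [wZ, Matrix.vecHead, Matrix.vecTail, Function.comp]

lemma AL_dcast (ℓ r : ℕ) (i j : Fin 4) :
    (diagonal ![(ℓ : ℚ) ^ r, (ℓ : ℚ) ^ r, 1, 1]) i j = (((dZ ((ℓ:ℤ)^r)) i j : ℤ) : ℚ) := by
  fin_cases i <;> fin_cases j <;>
    simp [dZ, Matrix.diagonal, Matrix.vecHead, Matrix.vecTail, Function.comp]

lemma AL_mapmul (X Y : Matrix (Fin 4) (Fin 4) ℤ) :
    (X * Y).map (Int.cast : ℤ → ℚ) = X.map Int.cast * Y.map Int.cast := by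
  ext i j
  simp [Matrix.map_apply, Matrix.mul_apply, Fin.sum_univ_four]

/-- Atkin–Lehner element: `U_ℓ² ∈ ℓ^r · Γ^para(M)`, where `U_ℓ = γ_ℓ · diag(ℓ^r,ℓ^r,1,1)`,
`r = val_ℓ(M)`, and `γ_ℓ ∈ Sp(4,ℤ)` satisfies the two stated congruences. -/
theorem atkin_lehner_sq_mem (M ℓ : ℕ) (hM : 0 < M) (hℓ : ℓ.Prime)
    (r : ℕ) (hr : r = padicValNat ℓ M)
    (γ : Matrix (Fin 4) (Fin 4) ℚ)
    (hγint : ∀ i j, ∃ a : ℤ, γ i j = a)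
    (hγsp : γᵀ * J4 * γ = J4)
    (hγ1 : ∀ i j, ∃ a : ℤ,
      γ i j - (!![0,0,0,1; 0,0,1,0; 0,-1,0,0; -1,0,0,0] : Matrix (Fin 4) (Fin 4) ℚ) i j
        = (ℓ : ℚ) ^ r * a)
    (hγ2 : ∀ i j, ∃ a : ℤ,
      γ i j - (1 : Matrix (Fin 4) (Fin 4) ℚ) i j = ((M : ℚ) / (ℓ : ℚ) ^ r) * a) :
    ∃ k ∈ paraGroup M,
      (γ * diagonal ![(ℓ : ℚ) ^ r, (ℓ : ℚ) ^ r, 1, 1]) *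
          (γ * diagonal ![(ℓ : ℚ) ^ r, (ℓ : ℚ) ^ r, 1, 1])
        = ((ℓ : ℚ) ^ r) • k := by
  classical
  have hl0 : (ℓ : ℚ) ≠ 0 := Nat.cast_ne_zero.mpr hℓ.ne_zero
  have hL0 : ((ℓ : ℚ) ^ r) ≠ 0 := pow_ne_zero _ hl0
  have hM0 : (M : ℚ) ≠ 0 := Nat.cast_ne_zero.mpr hM.ne'
  choose B hB using hγ1
  choose C hC using hγ2
  obtain ⟨Bz, hBz⟩ : ∃ X : Matrix (Fin 4) (Fin 4) ℤ, X = Matrix.of B := ⟨_, rfl⟩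
  obtain ⟨Cz, hCz⟩ : ∃ X : Matrix (Fin 4) (Fin 4) ℤ, X = Matrix.of C := ⟨_, rfl⟩
  -- the prime power and the complementary divisor
  have hdvd : ℓ ^ r ∣ M := by rw [hr]; exact pow_padicValNat_dvd
  obtain ⟨nz, hnz⟩ : ∃ n : ℕ, n = M / ℓ ^ r := ⟨_, rfl⟩
  have hMn : ℓ ^ r * nz = M := by rw [hnz]; exact Nat.mul_div_cancel' hdvd
  have hMnQ : ((ℓ : ℚ)) ^ r * (nz : ℚ) = (M : ℚ) := by exact_mod_cast congrArg (Nat.cast : ℕ → ℚ) hMn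
  have hnq : ((nz : ℕ) : ℚ) = (M : ℚ) / (ℓ : ℚ) ^ r := by
    rw [eq_div_iff hL0, ← hMnQ]; ring
  have hnd : ¬ ℓ ∣ nz := by
    rw [hnz, hr, ← Nat.factorization_def M hℓ]
    exact Nat.not_dvd_ordCompl hℓ hM.ne'
  have hcopℕ : Nat.Coprime (ℓ ^ r * ℓ ^ r) nz :=
    Nat.Coprime.mul (((hℓ.coprime_iff_not_dvd).mpr hnd).pow_left _)
      (((hℓ.coprime_iff_not_dvd).mpr hnd).pow_left _)
  have hcopZ : IsCoprime ((ℓ:ℤ)^r * (ℓ:ℤ)^r) ((nz : ℤ)) := by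
    have h := Nat.isCoprime_iff_coprime.mpr hcopℕ
    convert h using 2 <;> push_cast <;> ring
  have hMeq : (M : ℤ) = (ℓ:ℤ)^r * (nz : ℤ) := by exact_mod_cast hMn.symm
  -- matrix cast identities
  have hγB : γ = (wZ + (ℓ:ℤ)^r • Bz).map (Int.cast : ℤ → ℚ) := by
    ext i j
    have h := hB i j
    rw [sub_eq_iff_eq_add] at h
    simp only [Matrix.map_apply, Matrix.add_apply, Matrix.smul_apply, smul_eq_mul, hBz,
      Matrix.of_apply]
    push_cast
    rw [AL_wcast i j, h]
    ring
  have hγC : γ = ((1 : Matrix (Fin 4) (Fin 4) ℤ) + (nz : ℤ) • Cz).map (Int.cast : ℤ → ℚ) := by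
    ext i j
    have h := hC i j
    rw [sub_eq_iff_eq_add, ← hnq] at h
    have hone : (((1 : Matrix (Fin 4) (Fin 4) ℤ) i j : ℤ) : ℚ)
        = (1 : Matrix (Fin 4) (Fin 4) ℚ) i j := by
      by_cases hij : i = j <;> simp [Matrix.one_apply, hij]
    simp only [Matrix.map_apply, Matrix.add_apply, Matrix.smul_apply, smul_eq_mul, hCz,
      Matrix.of_apply]
    push_cast
    rw [hone, h]
    ring
  have hDm : diagonal ![(ℓ : ℚ) ^ r, (ℓ : ℚ) ^ r, 1, 1]
      = (dZ ((ℓ:ℤ)^r)).map (Int.cast : ℤ → ℚ) := by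
    ext i j
    rw [AL_dcast ℓ r i j, Matrix.map_apply]
  -- the two expansions of  γ·D·γ·D
  obtain ⟨kz, hkz⟩ : ∃ X : Matrix (Fin 4) (Fin 4) ℤ, X = kzDef ((ℓ:ℤ)^r) Bz := ⟨_, rfl⟩
  obtain ⟨Tz, hTz⟩ : ∃ X : Matrix (Fin 4) (Fin 4) ℤ, X = tzDef ((ℓ:ℤ)^r) (nz : ℤ) Cz := ⟨_, rfl⟩
  obtain ⟨k, hk⟩ : ∃ X : Matrix (Fin 4) (Fin 4) ℚ, X = kz.map (Int.cast : ℤ → ℚ) := ⟨_, rfl⟩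
  have hsmulcast : ∀ (c : ℤ) (X : Matrix (Fin 4) (Fin 4) ℤ),
      (c • X).map (Int.cast : ℤ → ℚ) = ((c : ℚ)) • X.map (Int.cast : ℤ → ℚ) := by
    intro c X; ext i j
    simp only [Matrix.map_apply, Matrix.smul_apply, smul_eq_mul]
    push_cast
    ring
  have key : γ * diagonal ![(ℓ : ℚ) ^ r, (ℓ : ℚ) ^ r, 1, 1] * γ *
      diagonal ![(ℓ : ℚ) ^ r, (ℓ : ℚ) ^ r, 1, 1]
      = (((ℓ:ℤ)^r • kz).map (Int.cast : ℤ → ℚ)) := by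
    rw [hDm, hγB, ← AL_mapmul, ← AL_mapmul, ← AL_mapmul, AL_I1, hkz]
  have keyC : γ * diagonal ![(ℓ : ℚ) ^ r, (ℓ : ℚ) ^ r, 1, 1] * γ *
      diagonal ![(ℓ : ℚ) ^ r, (ℓ : ℚ) ^ r, 1, 1]
      = ((dZ ((ℓ:ℤ)^r) * dZ ((ℓ:ℤ)^r) + (nz : ℤ) • Tz).map (Int.cast : ℤ → ℚ)) := by
    rw [hDm, hγC, ← AL_mapmul, ← AL_mapmul, ← AL_mapmul, AL_I2, hTz]
  have intEq : (ℓ:ℤ)^r • kz = dZ ((ℓ:ℤ)^r) * dZ ((ℓ:ℤ)^r) + (nz : ℤ) • Tz := by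
    have h := key.symm.trans keyC
    ext i j
    have h2 := congrFun (congrFun h i) j
    simp only [Matrix.map_apply] at h2
    exact_mod_cast h2
  have kmain : γ * diagonal ![(ℓ : ℚ) ^ r, (ℓ : ℚ) ^ r, 1, 1] * γ *
      diagonal ![(ℓ : ℚ) ^ r, (ℓ : ℚ) ^ r, 1, 1] = ((ℓ : ℚ) ^ r) • k := by
    rw [key, hsmulcast, hk]
    push_cast
    rfl
  have hEq : ∀ i j : Fin 4, i ≠ j → (ℓ:ℤ)^r * kz i j = (nz : ℤ) * Tz i j := by
    intro i j hij
    have h2 := congrFun (congrFun intEq i) j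
    rw [Matrix.smul_apply, Matrix.add_apply, Matrix.smul_apply, AL_ddiag ((ℓ:ℤ)^r) i j hij,
      zero_add, smul_eq_mul, smul_eq_mul] at h2
    exact h2
  -- entrywise divisibility by ℓ^r, then by M, at the five "Mℤ" positions
  have hkentry : ∀ (i j : Fin 4) (c : ℤ), i ≠ j →
      (eZ ((ℓ:ℤ)^r) * wZ * Bz * dZ ((ℓ:ℤ)^r)) i j = (ℓ:ℤ)^r * c →
      (ℓ:ℤ)^r ∣ kz i j := by
    intro i j c hij ht
    refine ⟨(Bz * wZ) i j + c + (Bz * dZ ((ℓ:ℤ)^r) * Bz * dZ ((ℓ:ℤ)^r)) i j, ?_⟩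
    rw [hkz]
    simp only [kzDef, Matrix.add_apply, Matrix.smul_apply, smul_eq_mul, Matrix.neg_apply,
      Matrix.one_apply_ne hij, ht]
    ring
  have hMdvd : ∀ (i j : Fin 4) (c : ℤ), i ≠ j →
      (eZ ((ℓ:ℤ)^r) * wZ * Bz * dZ ((ℓ:ℤ)^r)) i j = (ℓ:ℤ)^r * c →
      (M : ℤ) ∣ kz i j := by
    intro i j c hij ht
    rw [hMeq]
    exact AL_combine _ _ _ _ hcopZ (hkentry i j c hij ht) (hEq i j hij)
  have t10 : (eZ ((ℓ:ℤ)^r) * wZ * Bz * dZ ((ℓ:ℤ)^r)) 1 0 = (ℓ:ℤ)^r * (Bz 2 0) := by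
    simp only [Matrix.mul_apply, Fin.sum_univ_four]
    simp [eZ, wZ, dZ, Matrix.vecHead, Matrix.vecTail, Function.comp]
    try ring
  have t20 : (eZ ((ℓ:ℤ)^r) * wZ * Bz * dZ ((ℓ:ℤ)^r)) 2 0 = (ℓ:ℤ)^r * (-(Bz 1 0) * (ℓ:ℤ)^r) := by
    simp only [Matrix.mul_apply, Fin.sum_univ_four]
    simp [eZ, wZ, dZ, Matrix.vecHead, Matrix.vecTail, Function.comp]
    try ring
  have t21 : (eZ ((ℓ:ℤ)^r) * wZ * Bz * dZ ((ℓ:ℤ)^r)) 2 1 = (ℓ:ℤ)^r * (-(Bz 1 1) * (ℓ:ℤ)^r) := by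
    simp only [Matrix.mul_apply, Fin.sum_univ_four]
    simp [eZ, wZ, dZ, Matrix.vecHead, Matrix.vecTail, Function.comp]
    try ring
  have t23 : (eZ ((ℓ:ℤ)^r) * wZ * Bz * dZ ((ℓ:ℤ)^r)) 2 3 = (ℓ:ℤ)^r * (-(Bz 1 3)) := by
    simp only [Matrix.mul_apply, Fin.sum_univ_four]
    simp [eZ, wZ, dZ, Matrix.vecHead, Matrix.vecTail, Function.comp]
    try ring
  have t30 : (eZ ((ℓ:ℤ)^r) * wZ * Bz * dZ ((ℓ:ℤ)^r)) 3 0 = (ℓ:ℤ)^r * (-(Bz 0 0) * (ℓ:ℤ)^r) := by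
    simp only [Matrix.mul_apply, Fin.sum_univ_four]
    simp [eZ, wZ, dZ, Matrix.vecHead, Matrix.vecTail, Function.comp]
    try ring
  -- final assembly
  refine ⟨k, ⟨?_, ?_⟩, ?_⟩
  · -- symplectic
    have hsym := AL_sympl ((ℓ : ℚ) ^ r) γ hγsp
    rw [kmain] at hsym
    have hLL : ((ℓ : ℚ) ^ r) * ((ℓ : ℚ) ^ r) ≠ 0 := mul_ne_zero hL0 hL0
    rw [Matrix.transpose_smul, Matrix.smul_mul, Matrix.smul_mul, Matrix.mul_smul,
      smul_smul] at hsym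
    exact smul_right_injective _ hLL hsym
  · -- lattice entries
    have lat : ∀ (i j : Fin 4) (a : ℤ), kz i j = (M : ℤ) * a →
        ((kz i j : ℤ) : ℚ) = (M : ℚ) * (a : ℚ) := by
      intro i j a ha; exact_mod_cast ha
    intro i j
    fin_cases i <;> fin_cases j
    · exact ⟨kz 0 0, by simp [hk, paraLat, Matrix.map_apply, Matrix.vecHead, Matrix.vecTail,
        Function.comp]⟩
    · exact ⟨kz 0 1, by simp [hk, paraLat, Matrix.map_apply, Matrix.vecHead, Matrix.vecTail,
        Function.comp]⟩
    · refine ⟨(M : ℤ) * kz 0 2, ?_⟩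
      have hq : ((kz 0 2 : ℤ) : ℚ) = (M : ℚ)⁻¹ * (((M : ℤ) * kz 0 2 : ℤ) : ℚ) := by
        push_cast
        rw [← mul_assoc, inv_mul_cancel₀ hM0, one_mul]
      simpa [hk, paraLat, Matrix.map_apply, Matrix.vecHead, Matrix.vecTail,
        Function.comp] using hq
    · exact ⟨kz 0 3, by simp [hk, paraLat, Matrix.map_apply, Matrix.vecHead, Matrix.vecTail,
        Function.comp]⟩
    · obtain ⟨a, ha⟩ := hMdvd 1 0 (Bz 2 0) (by decide) t10
      exact ⟨a, by simpa [hk, paraLat, Matrix.map_apply, Matrix.vecHead, Matrix.vecTail,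
        Function.comp] using lat 1 0 a ha⟩
    · exact ⟨kz 1 1, by simp [hk, paraLat, Matrix.map_apply, Matrix.vecHead, Matrix.vecTail,
        Function.comp]⟩
    · exact ⟨kz 1 2, by simp [hk, paraLat, Matrix.map_apply, Matrix.vecHead, Matrix.vecTail,
        Function.comp]⟩
    · exact ⟨kz 1 3, by simp [hk, paraLat, Matrix.map_apply, Matrix.vecHead, Matrix.vecTail,
        Function.comp]⟩
    · obtain ⟨a, ha⟩ := hMdvd 2 0 (-(Bz 1 0) * (ℓ:ℤ)^r) (by decide) t20
      exact ⟨a, by simpa [hk, paraLat, Matrix.map_apply, Matrix.vecHead, Matrix.vecTail,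
        Function.comp] using lat 2 0 a ha⟩
    · obtain ⟨a, ha⟩ := hMdvd 2 1 (-(Bz 1 1) * (ℓ:ℤ)^r) (by decide) t21
      exact ⟨a, by simpa [hk, paraLat, Matrix.map_apply, Matrix.vecHead, Matrix.vecTail,
        Function.comp] using lat 2 1 a ha⟩
    · exact ⟨kz 2 2, by simp [hk, paraLat, Matrix.map_apply, Matrix.vecHead, Matrix.vecTail,
        Function.comp]⟩
    · obtain ⟨a, ha⟩ := hMdvd 2 3 (-(Bz 1 3)) (by decide) t23
      exact ⟨a, by simpa [hk, paraLat, Matrix.map_apply, Matrix.vecHead, Matrix.vecTail,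
        Function.comp] using lat 2 3 a ha⟩
    · obtain ⟨a, ha⟩ := hMdvd 3 0 (-(Bz 0 0) * (ℓ:ℤ)^r) (by decide) t30
      exact ⟨a, by simpa [hk, paraLat, Matrix.map_apply, Matrix.vecHead, Matrix.vecTail,
        Function.comp] using lat 3 0 a ha⟩
    · exact ⟨kz 3 1, by simp [hk, paraLat, Matrix.map_apply, Matrix.vecHead, Matrix.vecTail,
        Function.comp]⟩
    · exact ⟨kz 3 2, by simp [hk, paraLat, Matrix.map_apply, Matrix.vecHead, Matrix.vecTail,
        Function.comp]⟩
    · exact ⟨kz 3 3, by simp [hk, paraLat, Matrix.map_apply, Matrix.vecHead, Matrix.vecTail,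
        Function.comp]⟩
  · rw [← mul_assoc]
    exact kmain
end

section
/- The map (q, r, n) ↦ q·r·n defines an isomorphism of groups ℚ^× × ℝ_{>0} × ∏_{ℓ prime} ℤ_ℓ^× ≅ 𝔸^× (the ideles of ℚ), where each factor is embedded in the ideles in the canonical way. -/
noncomputable section

namespace DedekindDomain

open IsDedekindDomain

/-- The finite integral adeles `∏_v R_v` (removed from Mathlib; restored with its old meaning). -/
def FiniteIntegralAdeles (R : Type*) (K : Type*) [CommRing R] [IsDedekindDomain R] [Field K]
    [Algebra R K] [IsFractionRing R K] : Type _ :=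
  ∀ v : HeightOneSpectrum R, v.adicCompletionIntegers K

instance (R : Type*) (K : Type*) [CommRing R] [IsDedekindDomain R] [Field K]
    [Algebra R K] [IsFractionRing R K] : CommRing (FiniteIntegralAdeles R K) :=
  Pi.commRing

/-- The inclusion of the finite integral adeles into the finite adele ring. -/
def FiniteIntegralAdeles.toFiniteAdeleRing (R : Type*) (K : Type*) [CommRing R]
    [IsDedekindDomain R] [Field K] [Algebra R K] [IsFractionRing R K] :
    FiniteIntegralAdeles R K →+* FiniteAdeleRing R K where
  toFun x := ⟨fun v => ((x v : v.adicCompletionIntegers K) : v.adicCompletion K),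
    Filter.Eventually.of_forall fun v => (x v).2⟩
  map_one' := rfl
  map_mul' _ _ := rfl
  map_zero' := rfl
  map_add' _ _ := rfl

instance (R : Type*) (K : Type*) [CommRing R] [IsDedekindDomain R] [Field K]
    [Algebra R K] [IsFractionRing R K] :
    Algebra (FiniteIntegralAdeles R K) (FiniteAdeleRing R K) :=
  (FiniteIntegralAdeles.toFiniteAdeleRing R K).toAlgebra

end DedekindDomain

end

open DedekindDomain IsDedekindDomain

/-! A finite idele `x` has valuation `1` at almost every place. Since `ℤ` is a principal ideal
domain, a product of powers of the prime generators is a `q ∈ ℚ^×` with the same valuations as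
`x` everywhere; it is unique up to the units `±1` of `ℤ`, and the sign is fixed by asking the
real component divided by `q` to be positive. Then `x / q` is a unit at every finite place. -/

open IsDedekindDomain.HeightOneSpectrum WithZero Filter
open scoped FiniteAdeleRing

namespace IsDedekindDomain

section DedekindDomain

variable {R K : Type*} [CommRing R] [IsDedekindDomain R] [Field K] [Algebra R K]
  [IsFractionRing R K]

theorem HeightOneSpectrum.exists_units_algebraMap_eq_of_valuation_eq_one (k : Kˣ)
    (h : ∀ v : HeightOneSpectrum R, v.valuation K k = 1) :
    ∃ u : Rˣ, algebraMap R K u = k := by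
  obtain ⟨a, ha⟩ := mem_integers_of_valuation_le_one K (k : K) fun v => (h v).le
  obtain ⟨b, hb⟩ := mem_integers_of_valuation_le_one K ((k⁻¹ : Kˣ) : K) fun v => by
    rw [Units.val_inv_eq_inv_val, map_inv₀, h v, inv_one]
  have hab : a * b = 1 := IsFractionRing.injective R K (by simp [ha, hb])
  exact ⟨⟨a, b, hab, mul_comm b a ▸ hab⟩, ha⟩

variable {v : HeightOneSpectrum R}

theorem HeightOneSpectrum.adicCompletionIntegers.valued_coe_units
    (n : (v.adicCompletionIntegers K)ˣ) : Valued.v (n : v.adicCompletion K) = 1 :=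
  adicCompletionIntegers.isUnit_iff_valued_eq_one.mp n.isUnit

theorem HeightOneSpectrum.adicCompletionIntegers.exists_units_coe_eq {y : v.adicCompletion K}
    (hy : Valued.v y = 1) : ∃ n : (v.adicCompletionIntegers K)ˣ, (n : v.adicCompletion K) = y :=
  ⟨(adicCompletionIntegers.isUnit_iff_valued_eq_one (a := ⟨y, hy.le⟩)).mpr hy |>.unit, rfl⟩

theorem FiniteAdeleRing.exists_eq_mul_of_valuation_eq_valued (x : 𝔸ᶠ[R, K]ˣ) (k : Kˣ)
    (hk : ∀ v, v.valuation K k = Valued.v ((x : 𝔸ᶠ[R, K]) v)) :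
    ∃ n : Π v : HeightOneSpectrum R, (v.adicCompletionIntegers K)ˣ,
      ∀ v, (x : 𝔸ᶠ[R, K]) v = k * n v := by
  have hk0 (v : HeightOneSpectrum R) : ((k : K) : v.adicCompletion K) ≠ 0 := by
    rw [← Valuation.ne_zero_iff Valued.v, valuedAdicCompletion_eq_valuation']
    simp
  have hunit (v : HeightOneSpectrum R) : Valued.v ((x : 𝔸ᶠ[R, K]) v / (k : K)) = 1 := by
    rw [map_div₀, ← hk, valuedAdicCompletion_eq_valuation', div_self]
    simp
  choose n hn using fun v => adicCompletionIntegers.exists_units_coe_eq (hunit v)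
  refine ⟨n, fun v => ?_⟩
  rw [hn, mul_div_cancel₀ _ (hk0 v)]

end DedekindDomain

open Submodule.IsPrincipal

theorem HeightOneSpectrum.generator_ne_zero {R : Type*} [CommRing R] [IsPrincipalIdealRing R]
    (v : HeightOneSpectrum R) : generator v.asIdeal ≠ 0 :=
  mt (eq_bot_iff_generator_eq_zero _).mpr v.ne_bot

section PrincipalIdealRing

variable {R : Type*} (K : Type*) [CommRing R] [IsDomain R] [IsPrincipalIdealRing R] [Field K]
  [Algebra R K] [IsFractionRing R K]

namespace HeightOneSpectrum

theorem valuation_generator_self (v : HeightOneSpectrum R) :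
    v.valuation K (algebraMap R K (generator v.asIdeal)) = exp (-1) := by
  rw [valuation_of_algebraMap]
  exact intValuation_singleton _ (generator_ne_zero v) (Ideal.span_singleton_generator _).symm

theorem valuation_generator_of_ne {v w : HeightOneSpectrum R} (hvw : v ≠ w) :
    w.valuation K (algebraMap R K (generator v.asIdeal)) = 1 := by
  rw [valuation_eq_one_iff_notMem]
  intro hmem
  have hle : v.asIdeal ≤ w.asIdeal := by
    rw [← Ideal.span_singleton_generator v.asIdeal, Ideal.span_le, Set.singleton_subset_iff]
    exact hmem
  exact hvw (HeightOneSpectrum.ext (v.isMaximal.eq_of_le w.isPrime.ne_top hle))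

theorem exists_units_valuation_eq (g : HeightOneSpectrum R → ℤᵐ⁰) (hg : ∀ v, g v ≠ 0)
    (hfin : ∀ᶠ v in cofinite, g v = 1) :
    ∃ k : Kˣ, ∀ v : HeightOneSpectrum R, v.valuation K k = g v := by
  classical
  set S := (eventually_cofinite.mp hfin).toFinset
  let π (v : HeightOneSpectrum R) : Kˣ :=
    Units.mk0 (algebraMap R K (generator v.asIdeal))
      ((map_ne_zero_iff _ (IsFractionRing.injective R K)).mpr (generator_ne_zero v))
  refine ⟨∏ v ∈ S, π v ^ (-log (g v)), fun w => ?_⟩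
  have hfactor (v : HeightOneSpectrum R) :
      w.valuation K ((π v ^ (-log (g v)) : Kˣ) : K) = if v = w then g w else 1 := by
    rw [Units.val_zpow_eq_zpow_val, map_zpow₀, Units.val_mk0]
    split_ifs with hvw
    · subst hvw
      rw [valuation_generator_self, ← exp_zsmul, smul_eq_mul, mul_neg_one, neg_neg,
        exp_log (hg v)]
    · rw [valuation_generator_of_ne K hvw, one_zpow]
  rw [Units.coe_prod, map_prod, Finset.prod_congr rfl fun v _ => hfactor v, Finset.prod_ite_eq']
  split_ifs with hw
  · rfl
  · simpa [S, eq_comm] using hw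

end HeightOneSpectrum

variable {K}

theorem FiniteAdeleRing.exists_units_valuation_eq_valued (x : 𝔸ᶠ[R, K]ˣ) :
    ∃ k : Kˣ, ∀ v, v.valuation K k = Valued.v ((x : 𝔸ᶠ[R, K]) v) := by
  obtain ⟨hne, hfin⟩ := FiniteAdeleRing.isUnit_iff.mp x.isUnit
  exact exists_units_valuation_eq K _ (fun v => (Valuation.ne_zero_iff _).mpr (hne v)) hfin

end PrincipalIdealRing

end IsDedekindDomain

theorem Rat.eq_one_or_neg_one_of_valuation_eq_one (q : ℚˣ)
    (h : ∀ v : HeightOneSpectrum ℤ, v.valuation ℚ q = 1) : q = 1 ∨ q = -1 := by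
  obtain ⟨u, hu⟩ := exists_units_algebraMap_eq_of_valuation_eq_one q h
  rcases Int.units_eq_one_or u with rfl | rfl
  · exact .inl (Units.ext (by simpa using hu.symm))
  · exact .inr (Units.ext (by simpa using hu.symm))

noncomputable def ideleDecompositionHom :
    ℚˣ × {r : ℝ // 0 < r} × (Π v : HeightOneSpectrum ℤ, (v.adicCompletionIntegers ℚ)ˣ) →*
      ℝ × 𝔸ᶠ[ℤ, ℚ] :=
  ((algebraMap ℚ (ℝ × 𝔸ᶠ[ℤ, ℚ])).toMonoidHom.comp (Units.coeHom ℚ)).coprod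
    (((MonoidHom.inl ℝ 𝔸ᶠ[ℤ, ℚ]).comp ⟨⟨Subtype.val, rfl⟩, fun _ _ => rfl⟩).coprod
      ((MonoidHom.inr ℝ 𝔸ᶠ[ℤ, ℚ]).comp
        ((algebraMap (FiniteIntegralAdeles ℤ ℚ) 𝔸ᶠ[ℤ, ℚ]).toMonoidHom.comp
          (MonoidHom.pi fun v => (Units.coeHom _).comp (Pi.evalMonoidHom _ v)))))

theorem ideleDecompositionHom_apply (q : ℚˣ) (r : {r : ℝ // 0 < r})
    (n : Π v : HeightOneSpectrum ℤ, (v.adicCompletionIntegers ℚ)ˣ) :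
    ideleDecompositionHom (q, r, n) =
      (((q : ℚ) : ℝ), algebraMap ℚ (FiniteAdeleRing ℤ ℚ) (q : ℚ)) * ((r : ℝ), 1) *
        (1, algebraMap (FiniteIntegralAdeles ℤ ℚ) (FiniteAdeleRing ℤ ℚ)
          (fun v => (n v : v.adicCompletionIntegers ℚ))) := by
  rw [mul_assoc]
  rfl

theorem ideleDecompositionHom_injective : Function.Injective ideleDecompositionHom := by
  rw [injective_iff_map_eq_one]
  rintro ⟨q, r, n⟩ h
  rw [ideleDecompositionHom_apply] at h
  have hreal : (q : ℝ) * r = 1 := by simpa using congrArg Prod.fst h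
  -- Not `(q : v.adicCompletion ℚ)`: over `ℚ` that coercion elaborates as `Rat.cast`.
  have hfin (v : HeightOneSpectrum ℤ) :
      algebraMap ℚ 𝔸ᶠ[ℤ, ℚ] q v * 1 * (n v : v.adicCompletionIntegers ℚ) = 1 :=
    congrArg (fun x : ℝ × 𝔸ᶠ[ℤ, ℚ] => x.2 v) h
  have hq : q = 1 := by
    have hval (v : HeightOneSpectrum ℤ) : v.valuation ℚ q = 1 := by
      have := congrArg Valued.v (hfin v)
      rwa [map_mul, map_mul, map_one, adicCompletionIntegers.valued_coe_units, mul_one, mul_one,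
        FiniteAdeleRing.algebraMap_apply, valuedAdicCompletion_eq_valuation'] at this
    rcases Rat.eq_one_or_neg_one_of_valuation_eq_one q hval with rfl | rfl
    · rfl
    · simp only [Units.val_neg, Units.val_one, Rat.cast_neg, Rat.cast_one, neg_mul, one_mul]
        at hreal
      linarith [r.2]
  subst hq
  have hr : r = 1 := Subtype.ext (by simpa using hreal)
  have hn : n = 1 := funext fun v => Units.ext <| Subtype.ext <| by
    have := hfin v
    rw [Units.val_one, map_one, mul_one] at this
    exact (one_mul _).symm.trans this
  simp [hr, hn]

theorem ideleDecompositionHom_mk_div (a : ℝ) (x : 𝔸ᶠ[ℤ, ℚ]) (k : ℚˣ)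
    (n : Π v : HeightOneSpectrum ℤ, (v.adicCompletionIntegers ℚ)ˣ)
    (hx : ∀ v, x v = k * n v) (hpos : 0 < a / k) :
    ideleDecompositionHom (k, ⟨a / k, hpos⟩, n) = (a, x) := by
  rw [ideleDecompositionHom_apply]
  refine Prod.ext ?_ (FiniteAdeleRing.ext ℚ fun v => ?_)
  · have hk : (k : ℝ) ≠ 0 := by simp
    simp [mul_div_cancel₀ _ hk]
  · change algebraMap ℚ 𝔸ᶠ[ℤ, ℚ] k v * 1 * (n v : v.adicCompletionIntegers ℚ) = x v
    rw [mul_one, hx v, FiniteAdeleRing.algebraMap_apply]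

theorem Rat.exists_units_valuation_eq_and_div_pos (k : ℚˣ) {a : ℝ} (ha : a ≠ 0) :
    ∃ q : ℚˣ, (∀ v : HeightOneSpectrum ℤ, v.valuation ℚ q = v.valuation ℚ k) ∧ 0 < a / q := by
  by_cases hpos : 0 < a / k
  · exact ⟨k, fun _ => rfl, hpos⟩
  · refine ⟨-k, fun v => by rw [Units.val_neg, Valuation.map_neg], ?_⟩
    have hne : a / k ≠ 0 := div_ne_zero ha (by simp)
    rw [Units.val_neg, Rat.cast_neg, div_neg]
    exact neg_pos.mpr (lt_of_le_of_ne (not_lt.mp hpos) hne)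

theorem exists_ideleDecompositionHom_eq (u : (ℝ × 𝔸ᶠ[ℤ, ℚ])ˣ) :
    ∃ x, ideleDecompositionHom x = u := by
  have ha : (u : ℝ × 𝔸ᶠ[ℤ, ℚ]).1 ≠ 0 := by
    simpa using (Units.map (MonoidHom.fst _ _) u).ne_zero
  obtain ⟨k, hk⟩ :=
    FiniteAdeleRing.exists_units_valuation_eq_valued (Units.map (MonoidHom.snd _ _) u)
  obtain ⟨q, hq, hpos⟩ := Rat.exists_units_valuation_eq_and_div_pos k ha
  obtain ⟨n, hn⟩ := FiniteAdeleRing.exists_eq_mul_of_valuation_eq_valued _ q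
    fun v => (hq v).trans (hk v)
  exact ⟨_, ideleDecompositionHom_mk_div _ _ q n hn hpos⟩

/-- The ideles of `ℚ`: the map `(q, r, n) ↦ q·r·n` from
`ℚ^× × ℝ_{>0} × ∏_ℓ ℤ_ℓ^×` to the unit group of the adele ring `ℝ × 𝔸_f` of `ℚ`
(each factor embedded in the canonical way) is an isomorphism of groups. -/
theorem idele_decomposition_of_Q :
    ∃ e : (ℚˣ × {r : ℝ // 0 < r} ×
        (Π v : HeightOneSpectrum ℤ, (v.adicCompletionIntegers ℚ)ˣ)) ≃*
          (ℝ × FiniteAdeleRing ℤ ℚ)ˣ,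
      ∀ (q : ℚˣ) (r : {r : ℝ // 0 < r})
        (n : Π v : HeightOneSpectrum ℤ, (v.adicCompletionIntegers ℚ)ˣ),
        ((e (q, r, n) : ℝ × FiniteAdeleRing ℤ ℚ)) =
          (((q : ℚ) : ℝ), algebraMap ℚ (FiniteAdeleRing ℤ ℚ) (q : ℚ)) *
            ((r : ℝ), 1) *
            (1, algebraMap (FiniteIntegralAdeles ℤ ℚ) (FiniteAdeleRing ℤ ℚ)
              (fun v => (n v : v.adicCompletionIntegers ℚ))) := by
  have hbij : Function.Bijective ideleDecompositionHom.toHomUnits :=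
    ⟨fun _ _ h => ideleDecompositionHom_injective (congrArg Units.val h), fun u =>
      let ⟨x, hx⟩ := exists_ideleDecompositionHom_eq u
      ⟨x, Units.ext hx⟩⟩
  exact ⟨MulEquiv.ofBijective _ hbij, ideleDecompositionHom_apply⟩
end

section
/- Let z ∈ 𝔬^× with z ∉ 1 + 𝔭, where 𝔬 is the ring of integers of a nonarchimedean local field with maximal ideal 𝔭, and let A(z) be the complement in 𝔬^× of the image of 𝔬^× − (1+𝔭) under the map w ↦ (z⁻¹−1)(w⁻¹−1)⁻¹. Then, with dx and dw the Haar measure of the additive group, for any locally constant function f on 𝔬^× we have ∫_{𝔬^× − A(z)} f(x) dx = ∫_{𝔬^× − (1+𝔭)} f((z⁻¹−1)(w⁻¹−1)⁻¹) dw. -/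
open MeasureTheory Metric Measure Set
open scoped ENNReal NNReal

private theorem norm_eq_one_of_near {F : Type*} [NontriviallyNormedField F] [IsUltrametricDist F] {a x : F}
    (ha : ‖a‖ = 1) (h : ‖x - a‖ < 1) : ‖x‖ = 1 := by
  have h2 : ‖x - a‖ ≠ ‖a‖ := by rw [ha]; exact h.ne
  have := IsUltrametricDist.norm_add_eq_max_of_norm_ne_norm h2
  rw [sub_add_cancel, ha] at this
  rw [this, max_eq_right h.le]

private theorem map_mul_haar {F : Type*} [NontriviallyNormedField F] [CompleteSpace F] [IsUltrametricDist F]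
    [LocallyCompactSpace F] [MeasurableSpace F] [BorelSpace F]
    (μ : Measure F) [μ.IsAddHaarMeasure] (hμ : μ {x : F | ‖x‖ ≤ 1} = 1)
    (c : F) (hc : ‖c‖ = 1) : Measure.map (fun x => c * x) μ = μ := by
  haveI : ProperSpace F := ProperSpace.of_nontriviallyNormedField_of_weaklyLocallyCompactSpace F
  have hc0 : c ≠ 0 := by intro h; rw [h, norm_zero] at hc; norm_num at hc
  set e : F ≃+ F :=
    { Equiv.mulLeft₀ c hc0 with map_add' := mul_add c } with he
  have hee : (e : F → F) = fun x => c * x := rfl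
  have hecont : Continuous e := continuous_const.mul continuous_id
  have hesymm : Continuous e.symm := by
    have : (e.symm : F → F) = fun x => c⁻¹ * x := by funext x; rfl
    rw [this]; exact continuous_const.mul continuous_id
  haveI hH : (Measure.map e μ).IsAddHaarMeasure :=
    AddEquiv.isAddHaarMeasure_map μ e hecont hesymm
  have huniq : Measure.map e μ = addHaarScalarFactor (Measure.map e μ) μ • μ :=
    isAddLeftInvariant_eq_smul _ _
  have hball : (Measure.map e μ) {x : F | ‖x‖ ≤ 1} = 1 := by
    rw [Measure.map_apply hecont.measurable]
    · have : ((e : F → F) ⁻¹' {x : F | ‖x‖ ≤ 1}) = {x : F | ‖x‖ ≤ 1} := by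
        ext x
        simp only [Set.mem_preimage, Set.mem_setOf_eq, hee]
        rw [norm_mul, hc, one_mul]
      rw [this, hμ]
    · exact measurableSet_le (continuous_norm.measurable) measurable_const
  have hk : (addHaarScalarFactor (Measure.map e μ) μ : ℝ≥0∞) = 1 := by
    have h2 := hball
    rw [huniq, Measure.smul_apply, hμ, ENNReal.smul_def, smul_eq_mul, mul_one] at h2
    exact_mod_cast h2
  calc Measure.map (fun x => c * x) μ = Measure.map e μ := by rw [hee]
    _ = μ := by rw [huniq, ENNReal.smul_def, hk, one_smul]

private theorem sphere_integral_inv {F : Type*} [NontriviallyNormedField F] [CompleteSpace F]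
    [IsUltrametricDist F] [LocallyCompactSpace F] [MeasurableSpace F] [BorelSpace F]
    (μ : Measure F) [μ.IsAddHaarMeasure] (hμ : μ {x : F | ‖x‖ ≤ 1} = 1)
    (S : Set F) (hS : MeasurableSet S) (hSsub : S ⊆ sphere (0:F) 1)
    (hSinv : ∀ x ∈ S, x⁻¹ ∈ S) (G : F → ℂ) :
    ∫ x in S, G x⁻¹ ∂μ = ∫ x in S, G x ∂μ := by
  haveI : ProperSpace F := ProperSpace.of_nontriviallyNormedField_of_weaklyLocallyCompactSpace F
  set Sph : Set F := sphere (0:F) 1 with hSphdef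
  have hSph : MeasurableSet Sph := (isClosed_sphere).measurableSet
  have me : MeasurableEmbedding (Subtype.val : Sph → F) := MeasurableEmbedding.subtype_coe hSph
  set ν : Measure Sph := μ.comap Subtype.val with hν
  -- left invariance
  haveI hinv : IsMulLeftInvariant ν := by
    constructor
    intro g
    ext s hs
    rw [Measure.map_apply (continuous_mul_left g).measurable hs, hν,
      me.comap_apply, me.comap_apply]
    have himg : Subtype.val '' ((fun h => g * h) ⁻¹' s) = (fun x : F => (g : F) * x) ⁻¹' (Subtype.val '' s) := by
      ext x
      constructor
      · rintro ⟨u, hu, rfl⟩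
        exact ⟨g * u, hu, rfl⟩
      · rintro ⟨v, hv, hvx⟩
        have hgx : ‖(g:F) * x‖ = 1 := by
          simp only [] at hvx; rw [← hvx]; exact mem_sphere_zero_iff_norm.mp v.2
        have hg1 : ‖(g:F)‖ = 1 := mem_sphere_zero_iff_norm.mp g.2
        have hx : x ∈ Sph := by
          rw [hSphdef, mem_sphere_zero_iff_norm]
          rw [norm_mul, hg1, one_mul] at hgx
          exact hgx
        refine ⟨⟨x, hx⟩, ?_, rfl⟩
        show g * ⟨x, hx⟩ ∈ s
        have : g * ⟨x, hx⟩ = v := by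
          apply Subtype.ext
          exact hvx.symm
        rwa [this]
    rw [himg]
    have hg1 : ‖(g:F)‖ = 1 := mem_sphere_zero_iff_norm.mp g.2
    rw [← Measure.map_apply (continuous_mul_left ((g:F))).measurable (me.measurableSet_image.2 hs),
      map_mul_haar μ hμ _ hg1]
  -- Haar
  have hball : ball (1:F) 1 ⊆ Sph := by
    intro x hx
    rw [mem_ball, dist_eq_norm] at hx
    exact mem_sphere_zero_iff_norm.mpr (norm_eq_one_of_near (norm_one) hx)
  have hν0 : ν univ ≠ 0 := by
    rw [hν, me.comap_apply, image_univ, Subtype.range_coe]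
    intro h
    have := measure_mono_null hball h
    exact (measure_ball_pos μ (1:F) one_pos).ne' this
  have hνtop : ν univ ≠ ∞ := by
    rw [hν, me.comap_apply, image_univ, Subtype.range_coe]
    exact (isCompact_sphere (0:F) 1).measure_lt_top.ne
  haveI : IsHaarMeasure ν :=
    isHaarMeasure_of_isCompact_nonempty_interior ν univ isCompact_univ
      (by rw [interior_univ]; exact ⟨1, trivial⟩) hν0 hνtop
  haveI : IsFiniteMeasure ν := ⟨lt_of_le_of_ne (le_top) hνtop⟩
  haveI : IsInvInvariant ν := by infer_instance
  -- now the integral identity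
  have hSS : Sph ∩ S = S := inter_eq_right.mpr hSsub
  have key : ∀ (u : Sph), S.indicator (fun x => G x⁻¹) (u : F) = S.indicator G ((u⁻¹ : Sph) : F) := by
    intro u
    rw [Metric.unitSphere.coe_inv]
    by_cases hu : (u : F) ∈ S
    · rw [indicator_of_mem hu, indicator_of_mem (hSinv _ hu)]
    · rw [indicator_of_notMem hu, indicator_of_notMem (fun h => hu ?_)]
      have := hSinv _ h
      rwa [inv_inv] at this
  calc ∫ x in S, G x⁻¹ ∂μ
      = ∫ x in Sph, S.indicator (fun x => G x⁻¹) x ∂μ := by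
        rw [setIntegral_indicator hS, hSS]
    _ = ∫ u : Sph, S.indicator (fun x => G x⁻¹) (u : F) ∂ν := (integral_subtype_comap hSph _).symm
    _ = ∫ u : Sph, S.indicator G ((u⁻¹ : Sph) : F) ∂ν := by
        exact integral_congr_ae (Filter.Eventually.of_forall key)
    _ = ∫ u : Sph, S.indicator G (u : F) ∂ν := integral_inv_eq_self (fun u : Sph => S.indicator G (u : F)) ν
    _ = ∫ x in Sph, S.indicator G x ∂μ := integral_subtype_comap hSph _
    _ = ∫ x in S, G x ∂μ := by rw [setIntegral_indicator hS, hSS]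

/-- Change of variables for the Möbius-type map `w ↦ (z⁻¹−1)(w⁻¹−1)⁻¹` on the units of
the ring of integers of a nonarchimedean local field: for `z ∈ 𝔬^×` with `z ∉ 1+𝔭` and
any locally constant function `f` on `𝔬^×`,
`∫_{𝔬^× − A(z)} f(x) dx = ∫_{𝔬^× − (1+𝔭)} f((z⁻¹−1)(w⁻¹−1)⁻¹) dw`, where
`𝔬^× − A(z)` is the image of `𝔬^× − (1+𝔭)` under the map and `dx` is the additive Haar
measure normalized so that `𝔬` has measure `1`. -/
theorem mobius_change_of_variables (F : Type*) [NontriviallyNormedField F]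
    [CompleteSpace F] [IsUltrametricDist F] [LocallyCompactSpace F]
    [MeasurableSpace F] [BorelSpace F]
    (μ : Measure F) [μ.IsAddHaarMeasure] (hμ : μ {x : F | ‖x‖ ≤ 1} = 1)
    (z : F) (hz : ‖z‖ = 1) (hz1 : ‖z - 1‖ = 1)
    (f : F → ℂ)
    (hf : IsLocallyConstant fun x : {x : F // ‖x‖ = 1} => f x) :
    ∫ x in (fun w : F => (z⁻¹ - 1) * (w⁻¹ - 1)⁻¹) ''
        {w : F | ‖w‖ = 1 ∧ ‖w - 1‖ = 1}, f x ∂μ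
      = ∫ w in {w : F | ‖w‖ = 1 ∧ ‖w - 1‖ = 1},
          f ((z⁻¹ - 1) * (w⁻¹ - 1)⁻¹) ∂μ := by
  haveI : ProperSpace F := ProperSpace.of_nontriviallyNormedField_of_weaklyLocallyCompactSpace F
  set c : F := z⁻¹ - 1 with hcdef
  have hz0 : z ≠ 0 := by intro h; rw [h, norm_zero] at hz; norm_num at hz
  have hc : ‖c‖ = 1 := by
    have : c = z⁻¹ * (1 - z) := by
      rw [hcdef, mul_sub, mul_one, inv_mul_cancel₀ hz0]
    rw [this, norm_mul, norm_inv, hz, norm_sub_rev, hz1]; norm_num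
  have hc0 : c ≠ 0 := by intro h; rw [h, norm_zero] at hc; norm_num at hc
  clear_value c
  set S : Set F := {w : F | ‖w‖ = 1 ∧ ‖w - 1‖ = 1} with hSdef
  set T : Set F := {x : F | ‖x‖ = 1 ∧ ‖x + c‖ = 1} with hTdef
  set s' : Set F := {y : F | ‖y‖ = 1 ∧ ‖y - c‖ = 1} with hs'def
  have hSm : MeasurableSet S :=
    (measurable_norm (measurableSet_singleton 1)).inter
      ((measurable_norm.comp (measurable_id.sub measurable_const)) (measurableSet_singleton 1))
  have norm_one_ne_zero : ∀ {a : F}, ‖a‖ = 1 → a ≠ 0 := by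
    intro a ha h; rw [h, norm_zero] at ha; norm_num at ha
  -- image identification
  have himg : (fun w : F => c * (w⁻¹ - 1)⁻¹) '' S = T := by
    ext x
    constructor
    · rintro ⟨w, ⟨hw1, hw2⟩, rfl⟩
      have hw0 : w ≠ 0 := norm_one_ne_zero hw1
      have hkey : w⁻¹ - 1 = w⁻¹ * (1 - w) := by
        rw [mul_sub, mul_one, inv_mul_cancel₀ hw0]
      have hn : ‖w⁻¹ - 1‖ = 1 := by
        rw [hkey, norm_mul, norm_inv, hw1, norm_sub_rev, hw2]; norm_num
      have hn0 : w⁻¹ - 1 ≠ 0 := norm_one_ne_zero hn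
      constructor
      · show ‖c * (w⁻¹ - 1)⁻¹‖ = 1
        rw [norm_mul, norm_inv, hc, hn]; norm_num
      · show ‖c * (w⁻¹ - 1)⁻¹ + c‖ = 1
        have : c * (w⁻¹ - 1)⁻¹ + c = c * w⁻¹ * (w⁻¹ - 1)⁻¹ := by
          calc c * (w⁻¹ - 1)⁻¹ + c
              = c * (w⁻¹ - 1)⁻¹ + c * ((w⁻¹ - 1) * (w⁻¹ - 1)⁻¹) := by
                rw [mul_inv_cancel₀ hn0, mul_one]
            _ = c * (w⁻¹ - 1 + 1) * (w⁻¹ - 1)⁻¹ := by ring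
            _ = c * w⁻¹ * (w⁻¹ - 1)⁻¹ := by rw [sub_add_cancel]
        rw [this, norm_mul, norm_mul, norm_inv, norm_inv, hc, hw1, hn]; norm_num
    · rintro ⟨hx1, hx2⟩
      have hx0 : x ≠ 0 := norm_one_ne_zero hx1
      have hxc0 : x + c ≠ 0 := norm_one_ne_zero hx2
      refine ⟨x * (x + c)⁻¹, ⟨?_, ?_⟩, ?_⟩
      · show ‖x * (x + c)⁻¹‖ = 1
        rw [norm_mul, norm_inv, hx1, hx2]; norm_num
      · show ‖x * (x + c)⁻¹ - 1‖ = 1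
        have : x * (x + c)⁻¹ - 1 = (-c) * (x + c)⁻¹ := by
          calc x * (x + c)⁻¹ - 1 = x * (x + c)⁻¹ - (x + c) * (x + c)⁻¹ := by
                rw [mul_inv_cancel₀ hxc0]
            _ = (-c) * (x + c)⁻¹ := by ring
        rw [this, norm_mul, norm_neg, norm_inv, hc, hx2]; norm_num
      · show c * ((x * (x + c)⁻¹)⁻¹ - 1)⁻¹ = x
        have h1 : (x * (x + c)⁻¹)⁻¹ - 1 = c * x⁻¹ := by
          calc (x * (x + c)⁻¹)⁻¹ - 1 = x⁻¹ * (x + c) - x⁻¹ * x := by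
                rw [mul_inv, inv_inv, inv_mul_cancel₀ hx0]
            _ = c * x⁻¹ := by ring
        rw [h1, mul_inv, inv_inv, ← mul_assoc, mul_comm c c⁻¹, inv_mul_cancel₀ hc0, one_mul]
  -- basic set facts
  have hTm : MeasurableSet T :=
    (measurable_norm (measurableSet_singleton 1)).inter
      ((measurable_norm.comp (measurable_id.add measurable_const)) (measurableSet_singleton 1))
  have hs'm : MeasurableSet s' :=
    (measurable_norm (measurableSet_singleton 1)).inter
      ((measurable_norm.comp (measurable_id.sub measurable_const)) (measurableSet_singleton 1))
  have hSsub : S ⊆ sphere (0:F) 1 := fun w hw => mem_sphere_zero_iff_norm.mpr hw.1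
  have hSinv : ∀ x ∈ S, x⁻¹ ∈ S := by
    rintro x ⟨hx1, hx2⟩
    have hx0 : x ≠ 0 := norm_one_ne_zero hx1
    constructor
    · show ‖x⁻¹‖ = 1
      rw [norm_inv, hx1]; norm_num
    · show ‖x⁻¹ - 1‖ = 1
      have : x⁻¹ - 1 = x⁻¹ * (1 - x) := by
        calc x⁻¹ - 1 = x⁻¹ - x⁻¹ * x := by rw [inv_mul_cancel₀ hx0]
          _ = x⁻¹ * (1 - x) := by ring
      rw [this, norm_mul, norm_inv, hx1, norm_sub_rev, hx2]; norm_num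
  -- measurable equivalences and their measure invariance
  haveI : μ.Regular := by infer_instance
  haveI : μ.IsNegInvariant := by infer_instance
  set e₁ : F ≃ᵐ F := (Homeomorph.subLeft (1:F)).toMeasurableEquiv with he₁
  have he₁c : (e₁ : F → F) = fun x => 1 - x := rfl
  set e₃ : F ≃ᵐ F := (Homeomorph.mulLeft₀ c hc0).toMeasurableEquiv with he₃
  have he₃c : (e₃ : F → F) = fun x => c * x := rfl
  set e₄ : F ≃ᵐ F := (Homeomorph.addLeft (-c)).toMeasurableEquiv with he₄
  have he₄c : (e₄ : F → F) = fun x => -c + x := rfl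
  have hmap₁ : Measure.map (e₁ : F → F) μ = μ := by
    rw [he₁c]
    have : (fun x : F => 1 - x) = (fun x : F => 1 + x) ∘ (fun x : F => -x) := by
      funext x; simp [sub_eq_add_neg]
    rw [this, ← Measure.map_map (measurable_const_add 1) measurable_neg,
      Measure.map_neg_eq_self, map_add_left_eq_self]
  have hmap₃ : Measure.map (e₃ : F → F) μ = μ := by
    rw [he₃c]; exact map_mul_haar μ hμ c hc
  have hmap₄ : Measure.map (e₄ : F → F) μ = μ := by
    rw [he₄c]; exact map_add_left_eq_self μ (-c)
  -- preimage identities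
  have hpre₁ : (e₁ : F → F) ⁻¹' S = S := by
    ext u
    show (‖1 - u‖ = 1 ∧ ‖1 - u - 1‖ = 1) ↔ (‖u‖ = 1 ∧ ‖u - 1‖ = 1)
    have h1 : (1:F) - u - 1 = -u := by ring
    rw [h1, norm_neg, norm_sub_rev]
    exact and_comm
  have hpre₃ : (e₃ : F → F) ⁻¹' s' = S := by
    ext v
    show (‖c * v‖ = 1 ∧ ‖c * v - c‖ = 1) ↔ (‖v‖ = 1 ∧ ‖v - 1‖ = 1)
    have h1 : c * v - c = c * (v - 1) := by ring
    rw [h1, norm_mul, norm_mul, hc, one_mul, one_mul]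
  have hpre₄ : (e₄ : F → F) ⁻¹' T = s' := by
    ext y
    show (‖-c + y‖ = 1 ∧ ‖-c + y + c‖ = 1) ↔ (‖y‖ = 1 ∧ ‖y - c‖ = 1)
    have h1 : -c + y = y - c := by ring
    rw [h1, sub_add_cancel]
    exact and_comm
  -- pointwise identity on S
  have hpt : ∀ u ∈ S, c * ((1 - u)⁻¹ - 1)⁻¹ = c * u⁻¹ - c := by
    rintro u ⟨hu1, hu2⟩
    have hu0 : u ≠ 0 := norm_one_ne_zero hu1
    have h1u : ((1:F) - u) ≠ 0 := by
      apply norm_one_ne_zero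
      rw [norm_sub_rev, hu2]
    have key : (1 - u)⁻¹ - 1 = u * (1 - u)⁻¹ := by
      calc (1 - u)⁻¹ - 1 = (1 - u)⁻¹ - (1 - u) * (1 - u)⁻¹ := by
            rw [mul_inv_cancel₀ h1u]
        _ = u * (1 - u)⁻¹ := by ring
    rw [key, mul_inv, inv_inv]
    calc c * (u⁻¹ * (1 - u)) = c * u⁻¹ - c * (u⁻¹ * u) := by ring
      _ = c * u⁻¹ - c := by rw [inv_mul_cancel₀ hu0, mul_one]
  -- the chain of substitutions
  calc ∫ x in (fun w : F => c * (w⁻¹ - 1)⁻¹) '' S, f x ∂μ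
      = ∫ x in T, f x ∂μ := by rw [himg]
    _ = ∫ y in s', f (y - c) ∂μ := by
        conv_lhs => rw [← hmap₄]
        rw [setIntegral_map_equiv e₄ f T, hpre₄]
        refine setIntegral_congr_fun hs'm (fun y _ => ?_)
        show f ((e₄ : F → F) y) = f (y - c)
        rw [he₄c]
        show f (-c + y) = f (y - c)
        rw [neg_add_eq_sub]
    _ = ∫ v in S, f (c * v - c) ∂μ := by
        conv_lhs => rw [← hmap₃]
        rw [setIntegral_map_equiv e₃ (fun y => f (y - c)) s', hpre₃]
        refine setIntegral_congr_fun hSm (fun v _ => ?_)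
        show f ((e₃ : F → F) v - c) = f (c * v - c)
        rw [he₃c]
    _ = ∫ u in S, f (c * u⁻¹ - c) ∂μ :=
        (sphere_integral_inv μ hμ S hSm hSsub hSinv (fun v => f (c * v - c))).symm
    _ = ∫ u in S, f (c * ((1 - u)⁻¹ - 1)⁻¹) ∂μ :=
        setIntegral_congr_fun hSm (fun u hu => by rw [hpt u hu])
    _ = ∫ w in S, f (c * (w⁻¹ - 1)⁻¹) ∂μ := by
        conv_rhs => rw [← hmap₁]
        rw [setIntegral_map_equiv e₁ (fun w => f (c * (w⁻¹ - 1)⁻¹)) S, hpre₁]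
        refine setIntegral_congr_fun hSm (fun u _ => ?_)
        show f (c * ((1 - u)⁻¹ - 1)⁻¹) = f (c * (((e₁ : F → F) u)⁻¹ - 1)⁻¹)
        rw [he₁c]
end
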